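/- Let l > b ≥ 0 be integers and define u_{l,b,β} = C(2l-2b, l-2β) + 2·∑_{k=1}^{l} (-1)^k C(2l-2b, l-k-2β) for 0 ≤ β ≤ b, with the convention C(a,c) = 0 if c < 0 or c > a. Then ∑_{β=0}^{b} u_{l,b,β} · C(b, β) = 0. -/

import Mathlib

/-- Binomial coefficient `C a b` for integers, with the convention that
`C a b = 0` whenever `b < 0` or `b > a`. -/
def intChoose (a b : ℤ) : ℤ :=
  if 0 ≤ b ∧ b ≤ a then (a.toNat.choose b.toNat : ℤ) else 0

/-- `u_{l,b,β} = C(2l-2b, l-2β) + 2·∑_{k=1}^{l} (-1)^k C(2l-2b, l-k-2β)`. -/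
def uLBB (l b β : ℕ) : ℤ :=
  intChoose (2 * l - 2 * b) ((l : ℤ) - 2 * β) +
    2 * ∑ k ∈ Finset.Icc 1 l,
      (-1 : ℤ) ^ k * intChoose (2 * l - 2 * b) ((l : ℤ) - k - 2 * β)

open Finset

lemma intChoose_neg (a c : ℤ) (hc : c < 0) : intChoose a c = 0 := by
  unfold intChoose; rw [if_neg]; omega

lemma intChoose_natCast (a : ℕ) (c : ℤ) (hc : 0 ≤ c) :
    intChoose (a : ℤ) c = (a.choose c.toNat : ℤ) := by
  unfold intChoose
  by_cases h : c ≤ (a : ℤ)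
  · rw [if_pos ⟨hc, h⟩, Int.toNat_natCast]
  · rw [if_neg (by omega), Nat.choose_eq_zero_of_lt (by omega), Nat.cast_zero]

lemma intChoose_nat (a m : ℕ) : intChoose (a : ℤ) (m : ℤ) = (a.choose m : ℤ) := by
  rw [intChoose_natCast a _ (by positivity), Int.toNat_natCast]

lemma intChoose_symm (a : ℕ) (c : ℤ) : intChoose a c = intChoose a ((a : ℤ) - c) := by
  unfold intChoose
  by_cases h : 0 ≤ c ∧ c ≤ (a : ℤ)
  · rw [if_pos h, if_pos (by omega), Int.toNat_natCast]
    have h1 : ((a : ℤ) - c).toNat = a - c.toNat := by omega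
    rw [h1, Nat.choose_symm (by omega)]
  · rw [if_neg h, if_neg (by omega)]

/-- Pascal, in a form valid also for `m = 0`. -/
lemma pascal_int (n m : ℕ) :
    (((n + 1).choose m : ℤ)) = (n.choose m : ℤ) + intChoose n ((m : ℤ) - 1) := by
  cases m with
  | zero =>
      rw [show ((0 : ℕ) : ℤ) - 1 = -1 by norm_num,
        intChoose_neg (n : ℤ) (-1) (by norm_num)]
      simp
  | succ k =>
      have h1 : ((k + 1 : ℕ) : ℤ) - 1 = (k : ℤ) := by push_cast; ring
      rw [h1, intChoose_nat, Nat.choose_succ_succ]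
      push_cast; ring

/-- Key alternating partial sum identity. -/
lemma key (n m : ℕ) :
    (((n + 1).choose m : ℤ)) +
        2 * ∑ i ∈ range m, (-1 : ℤ) ^ (i + 1) * ((n + 1).choose (m - 1 - i)) =
      intChoose n (m : ℤ) - intChoose n ((m : ℤ) - 1) := by
  induction m with
  | zero =>
      rw [show ((0 : ℕ) : ℤ) - 1 = -1 by norm_num,
        intChoose_neg (n : ℤ) (-1) (by norm_num), intChoose_nat n 0]
      simp
  | succ m ih =>
      have hsum : ∑ i ∈ range (m + 1), (-1 : ℤ) ^ (i + 1) * ((n + 1).choose (m + 1 - 1 - i))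
          = -(∑ i ∈ range m, (-1 : ℤ) ^ (i + 1) * ((n + 1).choose (m - 1 - i)))
            - ((n + 1).choose m : ℤ) := by
        rw [Finset.sum_range_succ']
        have h0 : ∀ i ∈ range m,
            (-1 : ℤ) ^ (i + 1 + 1) * ((n + 1).choose (m + 1 - 1 - (i + 1)))
              = -((-1 : ℤ) ^ (i + 1) * ((n + 1).choose (m - 1 - i))) := by
          intro i _
          have : m + 1 - 1 - (i + 1) = m - 1 - i := by omega
          rw [this, pow_succ]; ring
        rw [Finset.sum_congr rfl h0, Finset.sum_neg_distrib]
        simp only [pow_one, neg_one_mul, Nat.add_sub_cancel]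
        rw [Nat.sub_zero]
        ring
      rw [hsum]
      have hml : ((m + 1 : ℕ) : ℤ) - 1 = (m : ℤ) := by push_cast; ring
      rw [hml]
      have hp1 := pascal_int n (m + 1)
      have hp2 := pascal_int n m
      have hcast : ((m + 1 : ℕ) : ℤ) = (m : ℤ) + 1 := by push_cast; ring
      rw [hcast] at hp1 ⊢
      have h3 : intChoose n ((m : ℤ) + 1 - 1) = intChoose n (m : ℤ) := by norm_num
      rw [h3] at hp1
      have h4 : intChoose n ((m : ℤ) + 1) = (n.choose (m + 1) : ℤ) := by
        have := intChoose_nat n (m + 1); rwa [hcast] at this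
      rw [h4]
      have hp3 := intChoose_nat n m
      linarith [ih, hp1, hp2, hp3]

lemma u_eq (l b β : ℕ) (hlb : b < l) :
    uLBB l b β = intChoose ((2 * (l - b) - 1 : ℕ) : ℤ) ((l : ℤ) - 2 * β)
      - intChoose ((2 * (l - b) - 1 : ℕ) : ℤ) ((l : ℤ) - 1 - 2 * β) := by
  have hn : (2 * l - 2 * b : ℤ) = ((2 * (l - b) : ℕ) : ℤ) := by push_cast; omega
  set N : ℕ := 2 * (l - b) - 1 with hN
  have hN1 : 2 * (l - b) = N + 1 := by omega
  unfold uLBB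
  rw [hn, hN1]
  by_cases hβ : 2 * β ≤ l
  · -- m := l - 2β
    set m : ℕ := l - 2 * β with hm
    have hml : (l : ℤ) - 2 * β = (m : ℤ) := by push_cast; omega
    rw [hml]
    have hsum : ∑ k ∈ Finset.Icc 1 l, (-1 : ℤ) ^ k *
          intChoose (((N + 1 : ℕ)) : ℤ) ((l : ℤ) - k - 2 * β)
        = ∑ i ∈ range m, (-1 : ℤ) ^ (i + 1) * ((N + 1).choose (m - 1 - i)) := by
      have hsub : Finset.Icc 1 m ⊆ Finset.Icc 1 l := by
        apply Finset.Icc_subset_Icc_right; omega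
      rw [← Finset.sum_subset hsub (by
        intro k hk hk'
        simp only [Finset.mem_Icc] at hk hk'
        rw [intChoose_neg _ _ (by omega), mul_zero])]
      have hmap : Finset.Icc 1 m
          = (Finset.range m).map ⟨fun i => i + 1, add_left_injective 1⟩ := by
        ext x
        simp only [Finset.mem_Icc, Finset.mem_map, Finset.mem_range,
          Function.Embedding.coeFn_mk]
        constructor
        · intro hx; exact ⟨x - 1, by omega, by omega⟩
        · rintro ⟨i, hi, rfl⟩; omega
      rw [hmap, Finset.sum_map]
      apply Finset.sum_congr rfl
      intro i hi
      simp only [Finset.mem_range] at hi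
      simp only [Function.Embedding.coeFn_mk]
      have h1 : (l : ℤ) - ((i + 1 : ℕ) : ℤ) - 2 * β = ((m - 1 - i : ℕ) : ℤ) := by
        push_cast; omega
      rw [h1, intChoose_nat]
    rw [hsum]
    have hch : intChoose (((N + 1 : ℕ)) : ℤ) (m : ℤ) = ((N + 1).choose m : ℤ) :=
      intChoose_nat _ _
    rw [hch]
    have := key N m
    rw [this]
    congr 1
    congr 1
    omega
  · -- l < 2β : everything vanishes
    rw [intChoose_neg _ _ (by omega), intChoose_neg _ _ (by omega),
      intChoose_neg _ _ (by omega)]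
    have : ∑ k ∈ Finset.Icc 1 l, (-1 : ℤ) ^ k *
        intChoose (((N + 1 : ℕ)) : ℤ) ((l : ℤ) - k - 2 * β) = 0 := by
      apply Finset.sum_eq_zero
      intro k hk
      simp only [Finset.mem_Icc] at hk
      rw [intChoose_neg _ _ (by omega), mul_zero]
    rw [this]; ring

theorem stmt5 (l b : ℕ) (hlb : b < l) :
    ∑ β ∈ Finset.range (b + 1), uLBB l b β * (b.choose β : ℤ) = 0 := by
  set N : ℕ := 2 * (l - b) - 1 with hN
  have hNval : (N : ℤ) = 2 * l - 2 * b - 1 := by push_cast; omega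
  have hrw : ∀ β ∈ Finset.range (b + 1), uLBB l b β * (b.choose β : ℤ)
      = intChoose (N : ℤ) ((l : ℤ) - 1 - 2 * ((b : ℤ) - β)) * (b.choose β : ℤ)
        - intChoose (N : ℤ) ((l : ℤ) - 1 - 2 * β) * (b.choose β : ℤ) := by
    intro β hβ
    rw [u_eq l b β hlb]
    have hsym : intChoose (N : ℤ) ((l : ℤ) - 2 * β)
        = intChoose (N : ℤ) ((l : ℤ) - 1 - 2 * ((b : ℤ) - β)) := by
      rw [intChoose_symm N ((l : ℤ) - 2 * β)]
      congr 1
      rw [hNval]; ring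
    rw [hsym]; ring
  rw [Finset.sum_congr rfl hrw, Finset.sum_sub_distrib]
  have hrefl : ∑ β ∈ Finset.range (b + 1),
      intChoose (N : ℤ) ((l : ℤ) - 1 - 2 * ((b : ℤ) - β)) * (b.choose β : ℤ)
      = ∑ β ∈ Finset.range (b + 1),
        intChoose (N : ℤ) ((l : ℤ) - 1 - 2 * β) * (b.choose β : ℤ) := by
    rw [← Finset.sum_range_reflect]
    apply Finset.sum_congr rfl
    intro β hβ
    simp only [Finset.mem_range] at hβ
    have h1 : ((b + 1 - 1 - β : ℕ) : ℤ) = (b : ℤ) - β := by push_cast; omega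
    have h2 : b.choose (b + 1 - 1 - β) = b.choose β := by
      rw [show b + 1 - 1 - β = b - β by omega, Nat.choose_symm (by omega)]
    rw [h1, h2]
    have h3 : ((b : ℤ) - ((b : ℤ) - β)) = (β : ℤ) := by ring
    rw [h3]
  rw [hrefl, sub_self]
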